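/- arXiv:2604.26502 — 2 statements merged into one kernel-verified Lean document; each statement's English description precedes it below -/
import Mathlib

section
/- Let n ≥ 1 and I ⊆ [n-1]. If A ∈ ASM^I(n) and B ∈ ASM(n), then A ≤ B in the Bruhat order on ASM(n) if and only if r_A(i,j) ≥ r_B(i,j) for all i ∈ [n]∖I and all j ∈ [n]. In particular, two elements A, B ∈ ASM^I(n) satisfy A ≤ B iff r_A(i,j) ≥ r_B(i,j) for all i ∉ I and j ∈ [n], and A = B iff r_A(i,j) = r_B(i,j) for all i ∉ I and j ∈ [n]. -/
/-- The rank (corner sum) matrix entry `r_A(i,j)` (1-based `i j`, zero when `i = 0` or `j = 0`). -/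
def rk (n : ℕ) (A : Matrix (Fin n) (Fin n) ℤ) (i j : ℕ) : ℤ :=
  ∑ p : Fin n, ∑ q : Fin n, if p.1 < i ∧ q.1 < j then A p q else 0

/-- `A` is an alternating sign matrix: entries in `{-1,0,1}`, the nonzero entries of each row
and column alternate in sign and sum to `1`; equivalently all partial row and column sums are
`0` or `1` and every full row and column sums to `1`. -/
def IsASM (n : ℕ) (A : Matrix (Fin n) (Fin n) ℤ) : Prop :=
  (∀ i j, A i j = -1 ∨ A i j = 0 ∨ A i j = 1) ∧
  (∀ i : Fin n, ∀ j : ℕ, j ≤ n →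
      (∑ q : Fin n, if q.1 < j then A i q else 0) = 0 ∨
      (∑ q : Fin n, if q.1 < j then A i q else 0) = 1) ∧
  (∀ j : Fin n, ∀ i : ℕ, i ≤ n →
      (∑ p : Fin n, if p.1 < i then A p j else 0) = 0 ∨
      (∑ p : Fin n, if p.1 < i then A p j else 0) = 1) ∧
  (∀ i : Fin n, (∑ q : Fin n, A i q) = 1) ∧
  (∀ j : Fin n, (∑ p : Fin n, A p j) = 1)

/-- `A ∈ ASM^I(n)`: `A` is an ASM and for every `i ∈ I` and `j ∈ [n]`,
`r_A(i,j) = r_A(i-1,j) + 1` or `r_A(i,j) = r_A(i+1,j)`. -/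
def InASMI (n : ℕ) (I : Finset ℕ) (A : Matrix (Fin n) (Fin n) ℤ) : Prop :=
  IsASM n A ∧ ∀ i ∈ I, ∀ j, 1 ≤ j → j ≤ n →
    rk n A i j = rk n A (i - 1) j + 1 ∨ rk n A i j = rk n A (i + 1) j

/-- Bruhat order on `ASM(n)`: `A ≤ B` iff `r_A(i,j) ≥ r_B(i,j)` for all `i,j ∈ [n]`. -/
def blE (n : ℕ) (A B : Matrix (Fin n) (Fin n) ℤ) : Prop :=
  ∀ i j, 1 ≤ i → i ≤ n → 1 ≤ j → j ≤ n → rk n B i j ≤ rk n A i j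

/-- Permutation matrix of `w`. -/
def permMatrix (n : ℕ) (w : Equiv.Perm (Fin n)) : Matrix (Fin n) (Fin n) ℤ :=
  Matrix.of fun i j => if w i = j then 1 else 0

/-- `w ∈ S_n^I`: `w(i) < w(i+1)` for all `i ∈ I` (indices 1-based). -/
def IsMinRep (n : ℕ) (I : Finset ℕ) (w : Equiv.Perm (Fin n)) : Prop :=
  ∀ p q : Fin n, (p.1 + 1) ∈ I → q.1 = p.1 + 1 → w p < w q

/-- Identity matrix. -/
def idMat (n : ℕ) : Matrix (Fin n) (Fin n) ℤ :=
  Matrix.of fun i j => if i = j then 1 else 0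

/-- Row partial sum. -/
def rps (n : ℕ) (A : Matrix (Fin n) (Fin n) ℤ) (i : Fin n) (j : ℕ) : ℤ :=
  ∑ q : Fin n, if q.1 < j then A i q else 0

lemma rk_eq_sum_rps (n : ℕ) (A : Matrix (Fin n) (Fin n) ℤ) (i j : ℕ) :
    rk n A i j = ∑ p : Fin n, if p.1 < i then rps n A p j else 0 := by
  unfold rk rps
  refine Finset.sum_congr rfl fun p _ => ?_
  split_ifs with h
  · exact Finset.sum_congr rfl fun q _ => by simp [h]
  · exact Finset.sum_eq_zero fun q _ => by simp [h]

lemma rk_succ (n : ℕ) (A : Matrix (Fin n) (Fin n) ℤ) (i : ℕ) (hi : i < n) (j : ℕ) :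
    rk n A (i + 1) j = rk n A i j + rps n A ⟨i, hi⟩ j := by
  rw [rk_eq_sum_rps, rk_eq_sum_rps]
  have key : ∀ p : Fin n, (if p.1 < i + 1 then rps n A p j else 0)
      = (if p.1 < i then rps n A p j else 0) + (if p = ⟨i, hi⟩ then rps n A p j else 0) := by
    intro p
    rcases lt_trichotomy p.1 i with h | h | h
    · simp [h, Nat.lt_succ_of_lt h, Fin.ext_iff, Nat.ne_of_lt h]
    · simp [h, Fin.ext_iff]
    · have h1 : ¬ p.1 < i + 1 := by omega
      have h2 : ¬ p.1 < i := by omega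
      simp [h1, h2, Fin.ext_iff, Nat.ne_of_gt h]
  rw [Finset.sum_congr rfl fun p _ => key p, Finset.sum_add_distrib,
    Finset.sum_ite_eq' Finset.univ (⟨i, hi⟩ : Fin n) (fun p => rps n A p j)]
  simp

lemma rps_succ (n : ℕ) (A : Matrix (Fin n) (Fin n) ℤ) (p : Fin n) (q : ℕ) (hq : q < n) :
    rps n A p (q + 1) = rps n A p q + A p ⟨q, hq⟩ := by
  unfold rps
  have key : ∀ r : Fin n, (if r.1 < q + 1 then A p r else 0)
      = (if r.1 < q then A p r else 0) + (if r = ⟨q, hq⟩ then A p r else 0) := by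
    intro r
    rcases lt_trichotomy r.1 q with h | h | h
    · simp [h, Nat.lt_succ_of_lt h, Fin.ext_iff, Nat.ne_of_lt h]
    · simp [h, Fin.ext_iff]
    · have h1 : ¬ r.1 < q + 1 := by omega
      have h2 : ¬ r.1 < q := by omega
      simp [h1, h2, Fin.ext_iff, Nat.ne_of_gt h]
  rw [Finset.sum_congr rfl fun r _ => key r, Finset.sum_add_distrib,
    Finset.sum_ite_eq' Finset.univ (⟨q, hq⟩ : Fin n) (fun r => A p r)]
  simp

lemma key_le (n : ℕ) (hn : 1 ≤ n) (I : Finset ℕ) (hI : I ⊆ Finset.Icc 1 (n - 1))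
    (A B : Matrix (Fin n) (Fin n) ℤ) (hA : InASMI n I A) (hB : IsASM n B)
    (h : ∀ i, 1 ≤ i → i ≤ n → i ∉ I → ∀ j, 1 ≤ j → j ≤ n → rk n B i j ≤ rk n A i j) :
    blE n A B := by
  intro i j hi1 hin hj1 hjn
  have hrpsB : ∀ p : Fin n, rps n B p j = 0 ∨ rps n B p j = 1 := fun p => hB.2.1 p j hjn
  have up : ∀ i0, i0 ≤ n →
      rk n B i0 j ≤ rk n A i0 j ∨ (i0 ∈ I ∧ rk n A i0 j = rk n A (i0 + 1) j) := by
    intro i0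
    induction i0 with
    | zero => intro _; left; simp [rk]
    | succ k ih =>
      intro hk
      by_cases hmem : (k + 1) ∈ I
      · rcases hA.2 (k + 1) hmem j hj1 hjn with h1 | h2
        · simp only [Nat.add_sub_cancel] at h1
          rcases ih (by omega) with hb | ⟨_, heq⟩
          · left
            have hlt : k < n := by omega
            have hstep := rk_succ n B k hlt j
            rcases hrpsB ⟨k, hlt⟩ with e | e <;> omega
          · exfalso; omega
        · right; exact ⟨hmem, h2⟩
      · left; exact h (k + 1) (by omega) hk hmem j hj1 hjn
  have down : ∀ k, rk n B (n - k) j ≤ rk n A (n - k) j := by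
    intro k
    induction k with
    | zero =>
      simp only [Nat.sub_zero]
      have hnI : n ∉ I := fun hmem => by
        have := Finset.mem_Icc.mp (hI hmem); omega
      exact h n hn le_rfl hnI j hj1 hjn
    | succ k ih =>
      by_cases hge : n ≤ k
      · have e : n - (k + 1) = n - k := by omega
        rw [e]; exact ih
      · have hlt : n - (k + 1) < n := by omega
        rcases up (n - (k + 1)) (by omega) with hb | ⟨hmem, heq⟩
        · exact hb
        · have hs : n - (k + 1) + 1 = n - k := by omega
          have hstep := rk_succ n B (n - (k + 1)) hlt j
          rw [hs] at hstep heq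
          rcases hrpsB ⟨n - (k + 1), hlt⟩ with e | e <;> omega
  have := down (n - i)
  rwa [Nat.sub_sub_self hin] at this

/-- For `A ∈ ASM^I(n)` and `B ∈ ASM(n)`, `A ≤ B` in Bruhat order iff
`r_A(i,j) ≥ r_B(i,j)` for all `i ∈ [n] \ I`, `j ∈ [n]`; in particular two elements of
`ASM^I(n)` are equal iff their rank matrices agree on rows outside `I`. -/

theorem stmt3 (n : ℕ) (hn : 1 ≤ n) (I : Finset ℕ) (hI : I ⊆ Finset.Icc 1 (n - 1))
    (A B : Matrix (Fin n) (Fin n) ℤ) (hA : InASMI n I A) (hB : IsASM n B) :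
    (blE n A B ↔
      ∀ i, 1 ≤ i → i ≤ n → i ∉ I → ∀ j, 1 ≤ j → j ≤ n → rk n B i j ≤ rk n A i j) ∧
    (∀ B', InASMI n I B' →
      (A = B' ↔
        ∀ i, 1 ≤ i → i ≤ n → i ∉ I → ∀ j, 1 ≤ j → j ≤ n → rk n A i j = rk n B' i j)) := by
  constructor
  · constructor
    · intro hle i hi1 hin _ j hj1 hjn
      exact hle i j hi1 hin hj1 hjn
    · exact key_le n hn I hI A B hA hB
  · intro B' hB'
    constructor
    · rintro rfl
      intro i _ _ _ j _ _; rfl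
    · intro hEq
      have h1 : blE n A B' :=
        key_le n hn I hI A B' hA hB'.1
          (fun i hi1 hin hiI j hj1 hjn => (hEq i hi1 hin hiI j hj1 hjn).ge)
      have h2 : blE n B' A :=
        key_le n hn I hI B' A hB' hA.1
          (fun i hi1 hin hiI j hj1 hjn => (hEq i hi1 hin hiI j hj1 hjn).le)
      have hall : ∀ i, i ≤ n → ∀ j, j ≤ n → rk n A i j = rk n B' i j := by
        intro i hin j hjn
        rcases Nat.eq_zero_or_pos i with rfl | hi
        · simp [rk]
        rcases Nat.eq_zero_or_pos j with rfl | hj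
        · simp [rk]
        exact le_antisymm (h2 i j hi hin hj hjn) (h1 i j hi hin hj hjn)
      ext p q
      have hrps : ∀ j, j ≤ n → rps n A p j = rps n B' p j := by
        intro j hjn
        have a := rk_succ n A p.1 p.isLt j
        have b := rk_succ n B' p.1 p.isLt j
        have e1 := hall (p.1 + 1) p.isLt j hjn
        have e2 := hall p.1 (le_of_lt p.isLt) j hjn
        simp only [Fin.eta] at a b
        omega
      have a := rps_succ n A p q.1 q.isLt
      have b := rps_succ n B' p q.1 q.isLt
      have e1 := hrps (q.1 + 1) q.isLt
      have e2 := hrps q.1 (le_of_lt q.isLt)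
      simp only [Fin.eta] at a b
      omega
end

section
/- Let n ≥ 1, let I ⊆ [n-1] with decomposition into maximal integer intervals I = ⋃_{t=1}^k {u_t,...,v_t}, and let A, B ∈ ASM^I(n). Define M : [n]×[n] → ℕ by M(i,j) = max{r_A(i,j), r_B(i,j)} for i ∈ [n]∖I, and M(i,j) = min{ M(v_t+1, j), M(u_t-1, j) + (i - u_t + 1) } for u_t ≤ i ≤ v_t (with the convention M(0,j) = 0). Then M is the rank matrix of a unique element C ∈ ASM^I(n), and C is the meet of A and B in the lattice ASM^I(n). Moreover, the join of A and B in ASM^I(n) coincides with their join in ASM(n). -/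
def ext (n : ℕ) (A : Matrix (Fin n) (Fin n) ℤ) (p q : ℕ) : ℤ :=
  if h : p < n ∧ q < n then A ⟨p, h.1⟩ ⟨q, h.2⟩ else 0

lemma sum_ite_fin (n i : ℕ) (hi : i ≤ n) (g : ℕ → ℤ) :
    (∑ p : Fin n, if p.1 < i then g p.1 else 0) = ∑ p ∈ Finset.range i, g p := by
  rw [Fin.sum_univ_eq_sum_range (fun p => if p < i then g p else 0)]
  have h : Finset.range i = (Finset.range n).filter (· < i) := by
    ext x; simp only [Finset.mem_filter, Finset.mem_range]; omega
  rw [h, Finset.sum_filter]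

lemma rk_eq (n : ℕ) (A : Matrix (Fin n) (Fin n) ℤ) (i j : ℕ) (hi : i ≤ n) (hj : j ≤ n) :
    rk n A i j = ∑ p ∈ Finset.range i, ∑ q ∈ Finset.range j, ext n A p q := by
  unfold rk
  have h1 : ∀ p : Fin n, (∑ q : Fin n, if p.1 < i ∧ q.1 < j then A p q else 0)
      = if p.1 < i then (∑ q ∈ Finset.range j, ext n A p.1 q) else 0 := by
    intro p
    by_cases hp : p.1 < i
    · simp only [hp, true_and, if_true]
      rw [← sum_ite_fin n j hj]
      congr 1; ext q
      congr 1
      unfold ext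
      rw [dif_pos ⟨p.2, q.2⟩]
    · simp [hp]
  rw [Finset.sum_congr rfl (fun p _ => h1 p)]
  exact sum_ite_fin n i hi (fun p => ∑ q ∈ Finset.range j, ext n A p q)

lemma rk_zero_left (n : ℕ) (A : Matrix (Fin n) (Fin n) ℤ) (j : ℕ) : rk n A 0 j = 0 := by
  unfold rk; simp

lemma rk_zero_right (n : ℕ) (A : Matrix (Fin n) (Fin n) ℤ) (i : ℕ) : rk n A i 0 = 0 := by
  unfold rk; simp

lemma rk_succ_row (n : ℕ) (A : Matrix (Fin n) (Fin n) ℤ) (i j : ℕ) (hi : i < n) (hj : j ≤ n) :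
    rk n A (i+1) j = rk n A i j
      + ∑ q : Fin n, (if q.1 < j then A ⟨i, hi⟩ q else 0) := by
  rw [rk_eq n A (i+1) j hi hj, rk_eq n A i j (le_of_lt hi) hj, Finset.sum_range_succ]
  congr 1
  rw [← sum_ite_fin n j hj (fun q => ext n A i q)]
  apply Finset.sum_congr rfl
  intro q _
  by_cases hq : q.1 < j
  · simp only [hq, if_true]
    unfold ext; rw [dif_pos ⟨hi, q.2⟩]
  · simp [hq]

lemma rk_succ_col (n : ℕ) (A : Matrix (Fin n) (Fin n) ℤ) (i j : ℕ) (hi : i ≤ n) (hj : j < n) :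
    rk n A i (j+1) = rk n A i j
      + ∑ p : Fin n, (if p.1 < i then A p ⟨j, hj⟩ else 0) := by
  rw [rk_eq n A i (j+1) hi hj, rk_eq n A i j hi (le_of_lt hj)]
  have h1 : ∀ p ∈ Finset.range i, (∑ q ∈ Finset.range (j+1), ext n A p q)
      = (∑ q ∈ Finset.range j, ext n A p q) + ext n A p j :=
    fun p _ => Finset.sum_range_succ _ j
  rw [Finset.sum_congr rfl h1, Finset.sum_add_distrib]
  congr 1
  rw [← sum_ite_fin n i hi (fun p => ext n A p j)]
  apply Finset.sum_congr rfl
  intro p _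
  by_cases hp : p.1 < i
  · simp only [hp, if_true]
    unfold ext; rw [dif_pos ⟨p.2, hj⟩]
  · simp [hp]

lemma rk_row_full (n : ℕ) (A : Matrix (Fin n) (Fin n) ℤ)
    (h : ∀ i : Fin n, (∑ q : Fin n, A i q) = 1) (i : ℕ) (hi : i ≤ n) :
    rk n A i n = i := by
  rw [rk_eq n A i n hi le_rfl]
  have h1 : ∀ p ∈ Finset.range i, (∑ q ∈ Finset.range n, ext n A p q) = 1 := by
    intro p hp
    have hp' : p < n := lt_of_lt_of_le (Finset.mem_range.mp hp) hi
    rw [← Fin.sum_univ_eq_sum_range (fun q => ext n A p q)]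
    rw [← h ⟨p, hp'⟩]
    apply Finset.sum_congr rfl
    intro q _
    unfold ext; rw [dif_pos ⟨hp', q.2⟩]
  rw [Finset.sum_congr rfl h1]
  simp

lemma rk_col_full (n : ℕ) (A : Matrix (Fin n) (Fin n) ℤ)
    (h : ∀ j : Fin n, (∑ p : Fin n, A p j) = 1) (j : ℕ) (hj : j ≤ n) :
    rk n A n j = j := by
  rw [rk_eq n A n j le_rfl hj, Finset.sum_comm]
  have h1 : ∀ q ∈ Finset.range j, (∑ p ∈ Finset.range n, ext n A p q) = 1 := by
    intro q hq
    have hq' : q < n := lt_of_lt_of_le (Finset.mem_range.mp hq) hj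
    rw [← Fin.sum_univ_eq_sum_range (fun p => ext n A p q)]
    rw [← h ⟨q, hq'⟩]
    apply Finset.sum_congr rfl
    intro p _
    unfold ext; rw [dif_pos ⟨p.2, hq'⟩]
  rw [Finset.sum_congr rfl h1]
  simp

structure CSM (n : ℕ) (r : ℕ → ℕ → ℤ) : Prop where
  zr : ∀ j, r 0 j = 0
  zc : ∀ i, r i 0 = 0
  v1 : ∀ i j, i < n → j ≤ n → r i j ≤ r (i+1) j
  v2 : ∀ i j, i < n → j ≤ n → r (i+1) j ≤ r i j + 1
  h1 : ∀ i j, i ≤ n → j < n → r i j ≤ r i (j+1)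
  h2 : ∀ i j, i ≤ n → j < n → r i (j+1) ≤ r i j + 1
  rn : ∀ i, i ≤ n → r i n = i
  cn : ∀ j, j ≤ n → r n j = j

namespace CSM

variable {n : ℕ} {r : ℕ → ℕ → ℤ} (h : CSM n r)

lemma mono_v (h : CSM n r) {i i' : ℕ} (j : ℕ) (hii : i ≤ i') (hi' : i' ≤ n) (hj : j ≤ n) :
    r i j ≤ r i' j := by
  induction i' with
  | zero =>
    have : i = 0 := Nat.le_zero.mp hii
    subst this; exact le_rfl
  | succ m ih =>
    rcases Nat.lt_or_ge i (m+1) with hlt | hge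
    · exact le_trans (ih (by omega) (by omega)) (h.v1 m j (by omega) hj)
    · have : i = m + 1 := by omega
      subst this; exact le_rfl

lemma bound_v (h : CSM n r) {i i' : ℕ} (j : ℕ) (hii : i ≤ i') (hi' : i' ≤ n) (hj : j ≤ n) :
    r i' j ≤ r i j + (i' - i : ℕ) := by
  induction i' with
  | zero => simp at hii; subst hii; simp
  | succ m ih =>
    rcases Nat.lt_or_ge i (m+1) with hlt | hge
    · have h1 := h.v2 m j (by omega) hj
      have h2 := ih (by omega) (by omega)
      have : ((m + 1 - i : ℕ) : ℤ) = ((m - i : ℕ) : ℤ) + 1 := by omega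
      rw [this]; omega
    · have : i = m + 1 := by omega
      subst this; simp

lemma nonneg (h : CSM n r) {i j : ℕ} (hi : i ≤ n) (hj : j ≤ n) : 0 ≤ r i j := by
  have := h.mono_v j (Nat.zero_le i) hi hj
  rw [h.zr] at this; exact this

lemma le_row (h : CSM n r) {i j : ℕ} (hi : i ≤ n) (hj : j ≤ n) : r i j ≤ i := by
  have := h.bound_v j (Nat.zero_le i) hi hj
  rw [h.zr] at this; simpa using this

end CSM

lemma isASM_csm {n : ℕ} {A : Matrix (Fin n) (Fin n) ℤ} (hA : IsASM n A) :
    CSM n (rk n A) := by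
  obtain ⟨_, hrow, hcol, hfr, hfc⟩ := hA
  refine ⟨rk_zero_left n A, rk_zero_right n A, ?_, ?_, ?_, ?_,
    rk_row_full n A hfr, rk_col_full n A hfc⟩
  · intro i j hi hj
    rw [rk_succ_row n A i j hi hj]
    rcases hrow ⟨i, hi⟩ j hj with h | h <;> omega
  · intro i j hi hj
    rw [rk_succ_row n A i j hi hj]
    rcases hrow ⟨i, hi⟩ j hj with h | h <;> omega
  · intro i j hi hj
    rw [rk_succ_col n A i j hi hj]
    rcases hcol ⟨j, hj⟩ i hi with h | h <;> omega
  · intro i j hi hj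
    rw [rk_succ_col n A i j hi hj]
    rcases hcol ⟨j, hj⟩ i hi with h | h <;> omega

lemma rk_build {n : ℕ} (N : ℕ → ℕ → ℤ) (hzr : ∀ j, N 0 j = 0) (hzc : ∀ i, N i 0 = 0)
    (i j : ℕ) (hi : i ≤ n) (hj : j ≤ n) :
    rk n (Matrix.of fun p q : Fin n => N (p.1+1) (q.1+1) - N p.1 (q.1+1) - N (p.1+1) q.1 + N p.1 q.1) i j
      = N i j := by
  set C := Matrix.of fun p q : Fin n => N (p.1+1) (q.1+1) - N p.1 (q.1+1) - N (p.1+1) q.1 + N p.1 q.1 with hC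
  rw [rk_eq n C i j hi hj]
  have hrow : ∀ p ∈ Finset.range i, (∑ q ∈ Finset.range j, ext n C p q)
      = (N (p+1) j - N p j) - (N (p+1) 0 - N p 0) := by
    intro p hp
    have hp' : p < n := lt_of_lt_of_le (Finset.mem_range.mp hp) hi
    have : ∀ q ∈ Finset.range j, ext n C p q
        = (N (p+1) (q+1) - N p (q+1)) - (N (p+1) q - N p q) := by
      intro q hq
      have hq' : q < n := lt_of_lt_of_le (Finset.mem_range.mp hq) hj
      unfold ext; rw [dif_pos ⟨hp', hq'⟩]
      show N (p+1) (q+1) - N p (q+1) - N (p+1) q + N p q = _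
      ring
    rw [Finset.sum_congr rfl this]
    exact Finset.sum_range_sub (fun q => N (p+1) q - N p q) j
  rw [Finset.sum_congr rfl hrow]
  have : ∀ p ∈ Finset.range i, (N (p+1) j - N p j) - (N (p+1) 0 - N p 0) = N (p+1) j - N p j := by
    intro p _; rw [hzc, hzc]; ring
  rw [Finset.sum_congr rfl this, Finset.sum_range_sub (fun p => N p j) i, hzr]
  ring

lemma csm_build {n : ℕ} {N : ℕ → ℕ → ℤ} (h : CSM n N) :
    ∃ C : Matrix (Fin n) (Fin n) ℤ, IsASM n C ∧ ∀ i j, i ≤ n → j ≤ n → rk n C i j = N i j := by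
  set C := Matrix.of fun p q : Fin n => N (p.1+1) (q.1+1) - N p.1 (q.1+1) - N (p.1+1) q.1 + N p.1 q.1 with hC
  have hrk : ∀ i j, i ≤ n → j ≤ n → rk n C i j = N i j := rk_build N h.zr h.zc
  refine ⟨C, ⟨?_, ?_, ?_, ?_, ?_⟩, hrk⟩
  · intro p q
    have e1 := h.v1 p.1 (q.1+1) p.2 q.2
    have e2 := h.v2 p.1 (q.1+1) p.2 q.2
    have e3 := h.v1 p.1 q.1 p.2 (le_of_lt q.2)
    have e4 := h.v2 p.1 q.1 p.2 (le_of_lt q.2)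
    have : C p q = N (p.1+1) (q.1+1) - N p.1 (q.1+1) - N (p.1+1) q.1 + N p.1 q.1 := rfl
    rw [this]; omega
  · intro p j hj
    have e := rk_succ_row n C p.1 j p.2 hj
    rw [Fin.eta, hrk (p.1+1) j p.2 hj, hrk p.1 j (le_of_lt p.2) hj] at e
    have e1 := h.v1 p.1 j p.2 hj
    have e2 := h.v2 p.1 j p.2 hj
    omega
  · intro q i hi
    have e := rk_succ_col n C i q.1 hi q.2
    rw [Fin.eta, hrk i (q.1+1) hi q.2, hrk i q.1 hi (le_of_lt q.2)] at e
    have e1 := h.h1 i q.1 hi q.2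
    have e2 := h.h2 i q.1 hi q.2
    omega
  · intro p
    have e := rk_succ_row n C p.1 n p.2 le_rfl
    rw [Fin.eta, hrk (p.1+1) n p.2 le_rfl, hrk p.1 n (le_of_lt p.2) le_rfl,
      h.rn (p.1+1) p.2, h.rn p.1 (le_of_lt p.2)] at e
    have : (∑ q : Fin n, if q.1 < n then C p q else 0) = ∑ q : Fin n, C p q := by
      apply Finset.sum_congr rfl; intro q _; rw [if_pos q.2]
    rw [this] at e
    push_cast at e
    omega
  · intro q
    have e := rk_succ_col n C n q.1 le_rfl q.2
    rw [Fin.eta, hrk n (q.1+1) le_rfl q.2, hrk n q.1 le_rfl (le_of_lt q.2),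
      h.cn (q.1+1) q.2, h.cn q.1 (le_of_lt q.2)] at e
    have : (∑ p : Fin n, if p.1 < n then C p q else 0) = ∑ p : Fin n, C p q := by
      apply Finset.sum_congr rfl; intro p _; rw [if_pos p.2]
    rw [this] at e
    push_cast at e
    omega

lemma eq_of_rk_eq {n : ℕ} (A B : Matrix (Fin n) (Fin n) ℤ)
    (h : ∀ i j, 1 ≤ i → i ≤ n → 1 ≤ j → j ≤ n → rk n A i j = rk n B i j) : A = B := by
  have h' : ∀ i j, i ≤ n → j ≤ n → rk n A i j = rk n B i j := by
    intro i j hi hj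
    rcases Nat.eq_zero_or_pos i with h0 | h0
    · subst h0; rw [rk_zero_left, rk_zero_left]
    rcases Nat.eq_zero_or_pos j with h0' | h0'
    · subst h0'; rw [rk_zero_right, rk_zero_right]
    exact h i j h0 hi h0' hj
  ext p q
  -- A p q = rk (p+1) (q+1) - rk p (q+1) - rk (p+1) q + rk p q
  have dA : ∀ (X : Matrix (Fin n) (Fin n) ℤ),
      X p q = rk n X (p.1+1) (q.1+1) - rk n X p.1 (q.1+1) - rk n X (p.1+1) q.1 + rk n X p.1 q.1 := by
    intro X
    have r1 := rk_succ_col n X (p.1+1) q.1 p.2 q.2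
    have r2 := rk_succ_col n X p.1 q.1 (le_of_lt p.2) q.2
    have r3 : (∑ x : Fin n, if x.1 < p.1 + 1 then X x ⟨q.1, q.2⟩ else 0)
        = (∑ x : Fin n, if x.1 < p.1 then X x ⟨q.1, q.2⟩ else 0) + X p q := by
      have : ∀ x : Fin n, (if x.1 < p.1 + 1 then X x ⟨q.1, q.2⟩ else 0)
          = (if x.1 < p.1 then X x ⟨q.1, q.2⟩ else 0) + (if x = p then X x ⟨q.1, q.2⟩ else 0) := by
        intro x
        rcases Nat.lt_trichotomy x.1 p.1 with hx | hx | hx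
        · rw [if_pos (by omega), if_pos hx, if_neg (by intro hh; subst hh; omega)]; ring
        · have : x = p := Fin.ext hx
          subst this
          rw [if_pos (by omega), if_neg (by omega), if_pos rfl]; ring
        · rw [if_neg (by omega), if_neg (by omega), if_neg (by intro hh; subst hh; omega)]; ring
      rw [Finset.sum_congr rfl (fun x _ => this x), Finset.sum_add_distrib]
      congr 1
      rw [Finset.sum_ite_eq' Finset.univ p (fun x => X x ⟨q.1, q.2⟩), if_pos (Finset.mem_univ p)]
    rw [r3] at r1
    omega
  rw [dA A, dA B, h' (p.1+1) (q.1+1) p.2 q.2, h' p.1 (q.1+1) (le_of_lt p.2) q.2,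
    h' (p.1+1) q.1 p.2 (le_of_lt q.2), h' p.1 q.1 (le_of_lt p.2) (le_of_lt q.2)]

/-- Explicit description of the lattice operations of `ASM^I(n)`: given `A, B ∈ ASM^I(n)`
and `M` defined by `M(i,j) = max (r_A(i,j)) (r_B(i,j))` for `i ∉ I` and by
`M(i,j) = min (M(v_t+1,j)) (M(u_t-1,j) + (i-u_t+1))` on the interval `{u_t,…,v_t}` of `I`
(with `M(0,j) = 0`), `M` is the rank matrix of a unique `C ∈ ASM^I(n)`, and `C` is the meet
of `A` and `B` in `ASM^I(n)`; moreover the join of `A` and `B` in `ASM^I(n)` coincides with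
their join in `ASM(n)`. -/
theorem stmt4 (n : ℕ) (hn : 1 ≤ n) (k : ℕ) (u v : ℕ → ℕ)
    (hu : ∀ t < k, 1 ≤ u t) (huv : ∀ t < k, u t ≤ v t) (hv : ∀ t < k, v t ≤ n - 1)
    (hsep : ∀ t, t + 1 < k → v t + 1 < u (t + 1))
    (I : Finset ℕ)
    (hI : I = (Finset.range k).biUnion fun t => Finset.Icc (u t) (v t))
    (A B : Matrix (Fin n) (Fin n) ℤ) (hA : InASMI n I A) (hB : InASMI n I B)
    (M : ℕ → ℕ → ℤ)
    (hM0 : ∀ j, M 0 j = 0)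
    (hM1 : ∀ i, 1 ≤ i → i ≤ n → i ∉ I → ∀ j, 1 ≤ j → j ≤ n →
      M i j = max (rk n A i j) (rk n B i j))
    (hM2 : ∀ t < k, ∀ i, u t ≤ i → i ≤ v t → ∀ j, 1 ≤ j → j ≤ n →
      M i j = min (M (v t + 1) j) (M (u t - 1) j + ((i - u t + 1 : ℕ) : ℤ))) :
    (∃! C : Matrix (Fin n) (Fin n) ℤ, InASMI n I C ∧
        ∀ i j, 1 ≤ i → i ≤ n → 1 ≤ j → j ≤ n → rk n C i j = M i j) ∧
    (∀ C, InASMI n I C →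
        (∀ i j, 1 ≤ i → i ≤ n → 1 ≤ j → j ≤ n → rk n C i j = M i j) →
        blE n C A ∧ blE n C B ∧
          ∀ D, InASMI n I D → blE n D A → blE n D B → blE n D C) ∧
    (∀ J, IsASM n J → blE n A J → blE n B J →
        (∀ D, IsASM n D → blE n A D → blE n B D → blE n J D) →
        InASMI n I J ∧ ∀ D, InASMI n I D → blE n A D → blE n B D → blE n J D) := by
  classical
  obtain ⟨hAasm, hAI⟩ := hA
  obtain ⟨hBasm, hBI⟩ := hB
  have ca : CSM n (rk n A) := isASM_csm hAasm
  have cb : CSM n (rk n B) := isASM_csm hBasm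
  -- interval combinatorics
  have memI : ∀ i, i ∈ I ↔ ∃ t, t < k ∧ u t ≤ i ∧ i ≤ v t := by
    intro i
    simp only [hI, Finset.mem_biUnion, Finset.mem_Icc, Finset.mem_range]
  have humono : ∀ t, t < k → ∀ s, s < t → v s + 1 < u t := by
    intro t
    induction t with
    | zero => omega
    | succ m ih =>
      intro hm s hs
      have h1 : v m + 1 < u (m+1) := hsep m hm
      rcases Nat.lt_or_ge s m with h | h
      · have h2 := ih (by omega) s h
        have h3 := huv m (by omega)
        omega
      · have : s = m := by omega
        subst this; exact h1
  have hvn : ∀ t, t < k → v t + 1 ≤ n := by intro t ht; have := hv t ht; omega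
  have hun : ∀ t, t < k → u t - 1 ≤ n := by
    intro t ht; have := hv t ht; have := huv t ht; omega
  have hnotIu : ∀ t, t < k → u t - 1 ∉ I := by
    intro t ht hmem
    rw [memI] at hmem
    obtain ⟨s, hs, h1, h2⟩ := hmem
    have hut := hu t ht
    rcases Nat.lt_trichotomy s t with h | h | h
    · have := humono t ht s h; have := huv s hs; omega
    · subst h; omega
    · have := humono s hs t h; have := huv t ht; omega
  have hnotIv : ∀ t, t < k → v t + 1 ∉ I := by
    intro t ht hmem
    rw [memI] at hmem
    obtain ⟨s, hs, h1, h2⟩ := hmem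
    rcases Nat.lt_trichotomy s t with h | h | h
    · have := humono t ht s h; have := huv t ht; omega
    · subst h; omega
    · have := humono s hs t h; have := huv t ht; omega
  have hIn : ∀ i ∈ I, 1 ≤ i ∧ i ≤ n - 1 := by
    intro i hi
    rw [memI] at hi
    obtain ⟨t, ht, h1, h2⟩ := hi
    have := hu t ht; have := hv t ht
    omega
  -- the max function
  set mx : ℕ → ℕ → ℤ := fun i j => max (rk n A i j) (rk n B i j) with hmxdef
  have cmx : CSM n mx := by
    refine ⟨?_, ?_, ?_, ?_, ?_, ?_, ?_, ?_⟩
    · intro j; simp only [hmxdef, rk_zero_left]; omega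
    · intro i; simp only [hmxdef, rk_zero_right]; omega
    · intro i j hi hj
      have h1 := ca.v1 i j hi hj; have h2 := cb.v1 i j hi hj
      simp only [hmxdef]; omega
    · intro i j hi hj
      have h1 := ca.v2 i j hi hj; have h2 := cb.v2 i j hi hj
      simp only [hmxdef]; omega
    · intro i j hi hj
      have h1 := ca.h1 i j hi hj; have h2 := cb.h1 i j hi hj
      simp only [hmxdef]; omega
    · intro i j hi hj
      have h1 := ca.h2 i j hi hj; have h2 := cb.h2 i j hi hj
      simp only [hmxdef]; omega
    · intro i hi; simp only [hmxdef, ca.rn i hi, cb.rn i hi]; omega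
    · intro j hj; simp only [hmxdef, ca.cn j hj, cb.cn j hj]; omega
  have F1 : ∀ i, i ≤ n → i ∉ I → ∀ j, 1 ≤ j → j ≤ n → M i j = mx i j := by
    intro i hi hiI j hj1 hj2
    rcases Nat.eq_zero_or_pos i with h0 | h0
    · subst h0; rw [hM0, cmx.zr]
    · exact hM1 i h0 hi hiI j hj1 hj2
  have F2 : ∀ t, t < k → ∀ i, u t ≤ i → i ≤ v t → ∀ j, 1 ≤ j → j ≤ n →
      M i j = min (mx (v t + 1) j) (mx (u t - 1) j + ((i - u t + 1 : ℕ) : ℤ)) := by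
    intro t ht i h1 h2 j hj1 hj2
    rw [hM2 t ht i h1 h2 j hj1 hj2,
      F1 (v t + 1) (hvn t ht) (hnotIv t ht) j hj1 hj2,
      F1 (u t - 1) (hun t ht) (hnotIu t ht) j hj1 hj2]
  have h0I : (0:ℕ) ∉ I := fun h => by have := (hIn 0 h).1; omega
  have hnI : n ∉ I := fun h => by have := (hIn n h).2; omega
  have memIt : ∀ i ∈ I, ∃ t, t < k ∧ u t ≤ i ∧ i ≤ v t := fun i hi => (memI i).mp hi
  -- vertical steps of M
  have vstep : ∀ i j, i < n → 1 ≤ j → j ≤ n → M i j ≤ M (i+1) j ∧ M (i+1) j ≤ M i j + 1 := by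
    intro i j hi hj1 hj2
    by_cases hiI : i ∈ I
    · obtain ⟨t, ht, h1, h2⟩ := memIt i hiI
      have hut := hu t ht
      have e := F2 t ht i h1 h2 j hj1 hj2
      rcases Nat.lt_or_ge i (v t) with hlt | hge
      · have e' := F2 t ht (i+1) (by omega) (by omega) j hj1 hj2
        have c1 : ((i + 1 - u t + 1 : ℕ) : ℤ) = ((i - u t + 1 : ℕ) : ℤ) + 1 := by omega
        rw [c1] at e'
        omega
      · have hiv : i = v t := by omega
        have e' := F1 (v t + 1) (hvn t ht) (hnotIv t ht) j hj1 hj2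
        have bb := cmx.bound_v j (show u t - 1 ≤ v t + 1 by omega) (hvn t ht) hj2
        have hc : ((v t + 1 - (u t - 1) : ℕ) : ℤ) = ((i - u t + 1 : ℕ) : ℤ) + 1 := by omega
        rw [hc] at bb
        rw [hiv] at e ⊢
        have : v t + 1 - u t + 1 = v t - u t + 2 := by omega
        omega
    · by_cases hi1I : (i+1) ∈ I
      · obtain ⟨t, ht, h1, h2⟩ := memIt (i+1) hi1I
        have hut := hu t ht
        have hieq : i + 1 = u t := by
          by_contra hne
          exact hiI ((memI i).mpr ⟨t, ht, by omega, by omega⟩)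
        have e := F1 i (by omega) hiI j hj1 hj2
        have e' := F2 t ht (i+1) h1 h2 j hj1 hj2
        have hc : ((i + 1 - u t + 1 : ℕ) : ℤ) = 1 := by omega
        have hu1 : u t - 1 = i := by omega
        rw [hc, hu1] at e'
        have mono := cmx.mono_v j (show i ≤ v t + 1 by omega) (hvn t ht) hj2
        omega
      · have e := F1 i (by omega) hiI j hj1 hj2
        have e' := F1 (i+1) (by omega) hi1I j hj1 hj2
        have s1 := cmx.v1 i j hi hj2
        have s2 := cmx.v2 i j hi hj2
        omega
  -- first column bound
  have col1 : ∀ i, i ≤ n → 0 ≤ M i 1 ∧ M i 1 ≤ 1 := by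
    intro i hi
    by_cases hiI : i ∈ I
    · obtain ⟨t, ht, h1, h2⟩ := memIt i hiI
      have e := F2 t ht i h1 h2 1 le_rfl hn
      have n1 := cmx.nonneg (hvn t ht) hn
      have n2 := cmx.nonneg (hun t ht) hn
      have s2 := cmx.h2 (v t + 1) 0 (hvn t ht) (by omega)
      rw [Nat.zero_add] at s2
      have z := cmx.zc (v t + 1)
      have hcc : (0:ℤ) ≤ ((i - u t + 1 : ℕ) : ℤ) := Int.natCast_nonneg _
      omega
    · have e := F1 i hi hiI 1 le_rfl hn
      have n1 := cmx.nonneg hi hn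
      have s2 := cmx.h2 i 0 hi (by omega)
      rw [Nat.zero_add] at s2
      have z := cmx.zc i
      omega
  -- horizontal steps of M (for j ≥ 1)
  have hstep : ∀ i j, i ≤ n → 1 ≤ j → j < n → M i j ≤ M i (j+1) ∧ M i (j+1) ≤ M i j + 1 := by
    intro i j hi hj1 hj
    by_cases hiI : i ∈ I
    · obtain ⟨t, ht, h1, h2⟩ := memIt i hiI
      have e := F2 t ht i h1 h2 j hj1 (by omega)
      have e' := F2 t ht i h1 h2 (j+1) (by omega) hj
      have s1 := cmx.h1 (v t+1) j (hvn t ht) hj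
      have s2 := cmx.h2 (v t+1) j (hvn t ht) hj
      have s3 := cmx.h1 (u t-1) j (hun t ht) hj
      have s4 := cmx.h2 (u t-1) j (hun t ht) hj
      omega
    · have e := F1 i hi hiI j hj1 (by omega)
      have e' := F1 i hi hiI (j+1) (by omega) hj
      have s1 := cmx.h1 i j hi hj
      have s2 := cmx.h2 i j hi hj
      omega
  -- M i n = i
  have Mrn : ∀ i, i ≤ n → M i n = (i:ℤ) := by
    intro i hi
    by_cases hiI : i ∈ I
    · obtain ⟨t, ht, h1, h2⟩ := memIt i hiI
      have hut := hu t ht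
      have e := F2 t ht i h1 h2 n hn le_rfl
      rw [cmx.rn (v t + 1) (hvn t ht), cmx.rn (u t - 1) (hun t ht)] at e
      have := hv t ht
      omega
    · rw [F1 i hi hiI n hn le_rfl, cmx.rn i hi]
  set Mz : ℕ → ℕ → ℤ := fun i j => if j = 0 then 0 else M i j with hMzdef
  have hMz1 : ∀ i j, 1 ≤ j → Mz i j = M i j := by
    intro i j hj; simp only [hMzdef]; rw [if_neg (by omega)]
  have cM : CSM n Mz := by
    refine ⟨?_, ?_, ?_, ?_, ?_, ?_, ?_, ?_⟩
    · intro j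
      simp only [hMzdef]
      split
      · rfl
      · exact hM0 j
    · intro i; simp only [hMzdef, if_pos rfl]
    · intro i j hi hj
      rcases Nat.eq_zero_or_pos j with h0 | h0
      · subst h0; simp only [hMzdef, if_pos rfl]; exact le_rfl
      · rw [hMz1 i j h0, hMz1 (i+1) j h0]; exact (vstep i j hi h0 hj).1
    · intro i j hi hj
      rcases Nat.eq_zero_or_pos j with h0 | h0
      · subst h0; simp only [hMzdef, if_pos rfl]; omega
      · rw [hMz1 i j h0, hMz1 (i+1) j h0]; exact (vstep i j hi h0 hj).2
    · intro i j hi hj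
      rcases Nat.eq_zero_or_pos j with h0 | h0
      · subst h0
        rw [hMz1 i 1 le_rfl]
        simp only [hMzdef, if_pos rfl]
        exact (col1 i hi).1
      · rw [hMz1 i j h0, hMz1 i (j+1) (by omega)]; exact (hstep i j hi h0 hj).1
    · intro i j hi hj
      rcases Nat.eq_zero_or_pos j with h0 | h0
      · subst h0
        rw [hMz1 i 1 le_rfl]
        simp only [hMzdef, if_pos rfl]
        have := (col1 i hi).2
        omega
      · rw [hMz1 i j h0, hMz1 i (j+1) (by omega)]; exact (hstep i j hi h0 hj).2
    · intro i hi; rw [hMz1 i n hn]; exact Mrn i hi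
    · intro j hj
      rcases Nat.eq_zero_or_pos j with h0 | h0
      · subst h0; simp only [hMzdef, if_pos rfl]; rfl
      · rw [hMz1 n j h0, F1 n le_rfl hnI j h0 hj, cmx.cn j hj]
  obtain ⟨C0, hC0asm, hC0rk⟩ := csm_build cM
  have hC0M : ∀ i j, i ≤ n → 1 ≤ j → j ≤ n → rk n C0 i j = M i j := by
    intro i j hi hj1 hj2
    rw [hC0rk i j hi hj2, hMz1 i j hj1]
  -- the ASM^I property of M
  have hMI : ∀ i ∈ I, ∀ j, 1 ≤ j → j ≤ n → M i j = M (i-1) j + 1 ∨ M i j = M (i+1) j := by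
    intro i hiI j hj1 hj2
    obtain ⟨t, ht, h1, h2⟩ := memIt i hiI
    have hut := hu t ht
    have e := F2 t ht i h1 h2 j hj1 hj2
    rcases le_or_gt (mx (v t + 1) j) (mx (u t - 1) j + ((i - u t + 1 : ℕ) : ℤ)) with hle | hlt
    · right
      rcases Nat.lt_or_ge i (v t) with hlt' | hge'
      · have e' := F2 t ht (i+1) (by omega) (by omega) j hj1 hj2
        have c1 : ((i+1-u t+1 : ℕ):ℤ) = ((i - u t + 1:ℕ):ℤ) + 1 := by omega
        rw [c1] at e'; omega
      · have hiv : i = v t := by omega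
        have e' := F1 (v t+1) (hvn t ht) (hnotIv t ht) j hj1 hj2
        rw [hiv] at e ⊢
        omega
    · left
      rcases Nat.lt_or_ge (u t) i with hgt | hge
      · have e' := F2 t ht (i-1) (by omega) (by omega) j hj1 hj2
        have c1 : ((i-1-u t+1:ℕ):ℤ) = ((i-u t+1:ℕ):ℤ) - 1 := by omega
        rw [c1] at e'
        have hcc : (1:ℤ) ≤ ((i - u t + 1 : ℕ) : ℤ) := by omega
        omega
      · have hieq : i = u t := by omega
        have e' := F1 (u t - 1) (hun t ht) (hnotIu t ht) j hj1 hj2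
        have hi1 : i - 1 = u t - 1 := by omega
        have c1 : ((i-u t+1:ℕ):ℤ) = 1 := by omega
        rw [hi1, e']
        omega
  have hC0in : InASMI n I C0 := by
    refine ⟨hC0asm, ?_⟩
    intro i hiI j hj1 hj2
    have hi := hIn i hiI
    rw [hC0M i j (by omega) hj1 hj2, hC0M (i+1) j (by omega) hj1 hj2]
    rcases Nat.eq_zero_or_pos (i-1) with h0 | h0
    · rw [h0, rk_zero_left]
      have := hMI i hiI j hj1 hj2
      rw [h0, hM0 j] at this
      exact this
    · rw [hC0M (i-1) j (by omega) hj1 hj2]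
      exact hMI i hiI j hj1 hj2
  -- lower bound: anything below mx is below M
  have hMge : ∀ (r : ℕ → ℕ → ℤ), CSM n r → (∀ i j, i ≤ n → 1 ≤ j → j ≤ n → r i j ≤ mx i j) →
      ∀ i j, i ≤ n → 1 ≤ j → j ≤ n → r i j ≤ M i j := by
    intro r cr hr i j hi hj1 hj2
    by_cases hiI : i ∈ I
    · obtain ⟨t,ht,h1,h2⟩ := memIt i hiI
      have hut := hu t ht
      rw [F2 t ht i h1 h2 j hj1 hj2]
      have m1 := cr.mono_v j (show i ≤ v t + 1 by omega) (hvn t ht) hj2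
      have m2 := cr.bound_v j (show u t - 1 ≤ i by omega) hi hj2
      have hr1 := hr (v t + 1) j (hvn t ht) hj1 hj2
      have hr2 := hr (u t - 1) j (hun t ht) hj1 hj2
      have hc : ((i - (u t - 1) : ℕ):ℤ) = ((i - u t + 1 : ℕ):ℤ) := by omega
      rw [hc] at m2
      omega
    · rw [F1 i hi hiI j hj1 hj2]; exact hr i j hi hj1 hj2
  -- structure of rank matrices of elements of ASM^I on intervals
  have key : ∀ (D : Matrix (Fin n) (Fin n) ℤ), InASMI n I D → ∀ t, t < k → ∀ j, 1 ≤ j → j ≤ n →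
      ∀ i, u t ≤ i → i ≤ v t →
      rk n D i j = rk n D (u t - 1) j + ((i - u t + 1 : ℕ) : ℤ) ∨
        rk n D i j = rk n D (v t + 1) j := by
    intro D hD t ht j hj1 hj2
    obtain ⟨hDasm, hDI⟩ := hD
    have cd : CSM n (rk n D) := isASM_csm hDasm
    have hut := hu t ht
    have hvt := hv t ht
    have sub1 : ∀ i, u t ≤ i → i ≤ v t → rk n D i j = rk n D (i-1) j →
        ∀ m, i ≤ m → m ≤ v t + 1 → rk n D m j = rk n D (i-1) j := by
      intro i hi1 hi2 hconst m
      induction m with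
      | zero => omega
      | succ m' ih =>
        intro hm1 hm2
        rcases Nat.lt_or_ge m' i with hcs | hcs
        · have : m' + 1 = i := by omega
          rw [this]; exact hconst
        · have ihm := ih (by omega) (by omega)
          have hm'I : m' ∈ I := (memI m').mpr ⟨t, ht, by omega, by omega⟩
          rcases hDI m' hm'I j hj1 hj2 with hcase | hcase
          · exfalso
            have mono := cd.mono_v j (show i - 1 ≤ m' - 1 by omega)
              (show m' - 1 ≤ n by omega) hj2
            have mono2 := cd.mono_v j (show m' ≤ v t + 1 by omega) (by omega) hj2
            have : m' - 1 + 1 = m' := by omega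
            have s1 := cd.v1 (m'-1) j (by omega) hj2
            rw [this] at s1
            omega
          · rw [← hcase]; exact ihm
    intro i hi1
    induction i, hi1 using Nat.le_induction with
    | base =>
      intro _
      have e1 : u t - 1 + 1 = u t := by omega
      have s1 := cd.v1 (u t - 1) j (by omega) hj2
      have s2 := cd.v2 (u t - 1) j (by omega) hj2
      rw [e1] at s1 s2
      rcases eq_or_lt_of_le s1 with heq | hlt2
      · right
        have := sub1 (u t) le_rfl (by omega) heq.symm (v t + 1) (by omega) le_rfl
        omega
      · left
        have c1 : ((u t - u t + 1 : ℕ):ℤ) = 1 := by omega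
        rw [c1]
        omega
    | succ m hm ih =>
      intro h2
      have ihm := ih (by omega)
      have s1 := cd.v1 m j (by omega) hj2
      have s2 := cd.v2 m j (by omega) hj2
      rcases eq_or_lt_of_le s1 with heq | hlt2
      · right
        have hc : m + 1 - 1 = m := by omega
        have := sub1 (m+1) (by omega) h2 (by rw [hc]; exact heq.symm) (v t + 1) (by omega) le_rfl
        rw [hc] at this
        omega
      · rcases ihm with hL | hR
        · left
          have c1 : ((m + 1 - u t + 1 : ℕ):ℤ) = ((m - u t + 1 : ℕ):ℤ) + 1 := by omega
          rw [c1]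
          omega
        · exfalso
          have mono := cd.mono_v j (show m + 1 ≤ v t + 1 by omega) (by omega) hj2
          omega
  -- upper bound property
  have hMub : ∀ D, InASMI n I D → (∀ i j, i ≤ n → 1 ≤ j → j ≤ n → mx i j ≤ rk n D i j) →
      ∀ i j, i ≤ n → 1 ≤ j → j ≤ n → M i j ≤ rk n D i j := by
    intro D hD hd i j hi hj1 hj2
    by_cases hiI : i ∈ I
    · obtain ⟨t,ht,h1,h2⟩ := memIt i hiI
      rw [F2 t ht i h1 h2 j hj1 hj2]
      have k1 := key D hD t ht j hj1 hj2 i h1 h2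
      have d1 := hd (v t+1) j (hvn t ht) hj1 hj2
      have d2 := hd (u t-1) j (hun t ht) hj1 hj2
      omega
    · rw [F1 i hi hiI j hj1 hj2]; exact hd i j hi hj1 hj2
  have mkub : ∀ D, blE n D A → blE n D B → ∀ i j, i ≤ n → 1 ≤ j → j ≤ n →
      mx i j ≤ rk n D i j := by
    intro D h1 h2 i j hi hj1 hj2
    rcases Nat.eq_zero_or_pos i with h0 | h0
    · subst h0; rw [cmx.zr, rk_zero_left]
    · have e1 := h1 i j h0 hi hj1 hj2
      have e2 := h2 i j h0 hi hj1 hj2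
      simp only [hmxdef]
      omega
  refine ⟨⟨C0, ⟨hC0in, fun i j h1 h2 h3 h4 => hC0M i j h2 h3 h4⟩, ?_⟩, ?_, ?_⟩
  · rintro C' ⟨hC'in, hC'rk⟩
    apply eq_of_rk_eq
    intro i j h1 h2 h3 h4
    rw [hC'rk i j h1 h2 h3 h4, hC0M i j h2 h3 h4]
  · intro C hCin hCrk
    refine ⟨?_, ?_, ?_⟩
    · intro i j h1 h2 h3 h4
      rw [hCrk i j h1 h2 h3 h4]
      refine hMge (rk n A) ca ?_ i j h2 h3 h4
      intro i' j' hi' hj1' hj2'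
      simp only [hmxdef]
      exact le_max_left _ _
    · intro i j h1 h2 h3 h4
      rw [hCrk i j h1 h2 h3 h4]
      refine hMge (rk n B) cb ?_ i j h2 h3 h4
      intro i' j' hi' hj1' hj2'
      simp only [hmxdef]
      exact le_max_right _ _
    · intro D hDin hDA hDB i j h1 h2 h3 h4
      rw [hCrk i j h1 h2 h3 h4]
      exact hMub D hDin (mkub D hDA hDB) i j h2 h3 h4
  · intro J hJasm hAJ hBJ hJmin
    set mn : ℕ → ℕ → ℤ := fun i j => min (rk n A i j) (rk n B i j) with hmndef
    have cmn : CSM n mn := by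
      refine ⟨?_, ?_, ?_, ?_, ?_, ?_, ?_, ?_⟩
      · intro j; simp only [hmndef, rk_zero_left]; omega
      · intro i; simp only [hmndef, rk_zero_right]; omega
      · intro i j hi hj
        have h1 := ca.v1 i j hi hj; have h2 := cb.v1 i j hi hj
        simp only [hmndef]; omega
      · intro i j hi hj
        have h1 := ca.v2 i j hi hj; have h2 := cb.v2 i j hi hj
        simp only [hmndef]; omega
      · intro i j hi hj
        have h1 := ca.h1 i j hi hj; have h2 := cb.h1 i j hi hj
        simp only [hmndef]; omega
      · intro i j hi hj
        have h1 := ca.h2 i j hi hj; have h2 := cb.h2 i j hi hj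
        simp only [hmndef]; omega
      · intro i hi; simp only [hmndef, ca.rn i hi, cb.rn i hi]; omega
      · intro j hj; simp only [hmndef, ca.cn j hj, cb.cn j hj]; omega
    obtain ⟨E, hEasm, hErk⟩ := csm_build cmn
    have hEA : blE n A E := by
      intro i j h1 h2 h3 h4
      rw [hErk i j h2 h4]
      simp only [hmndef]
      exact min_le_left _ _
    have hEB : blE n B E := by
      intro i j h1 h2 h3 h4
      rw [hErk i j h2 h4]
      simp only [hmndef]
      exact min_le_right _ _
    have hJE := hJmin E hEasm hEA hEB
    have hJmn : ∀ i j, i ≤ n → 1 ≤ j → j ≤ n → rk n J i j = mn i j := by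
      intro i j hi hj1 hj2
      rcases Nat.eq_zero_or_pos i with h0 | h0
      · subst h0; rw [rk_zero_left, cmn.zr]
      · have e1 := hAJ i j h0 hi hj1 hj2
        have e2 := hBJ i j h0 hi hj1 hj2
        have e3 := hJE i j h0 hi hj1 hj2
        rw [hErk i j hi hj2] at e3
        simp only [hmndef] at *
        omega
    refine ⟨⟨hJasm, ?_⟩, fun D hD hAD hBD => hJmin D hD.1 hAD hBD⟩
    intro i hiI j hj1 hj2
    have hi := hIn i hiI
    have e0 := hJmn i j (by omega) hj1 hj2
    have e1 := hJmn (i-1) j (by omega) hj1 hj2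
    have e2 := hJmn (i+1) j (by omega) hj1 hj2
    have sA := hAI i hiI j hj1 hj2
    have sB := hBI i hiI j hj1 hj2
    have e3 : i - 1 + 1 = i := by omega
    have va1 := ca.v1 (i-1) j (by omega) hj2
    have va2 := ca.v2 (i-1) j (by omega) hj2
    have vb1 := cb.v1 (i-1) j (by omega) hj2
    have vb2 := cb.v2 (i-1) j (by omega) hj2
    rw [e3] at va1 va2 vb1 vb2
    have wa1 := ca.v1 i j (by omega) hj2
    have wa2 := ca.v2 i j (by omega) hj2
    have wb1 := cb.v1 i j (by omega) hj2
    have wb2 := cb.v2 i j (by omega) hj2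
    rw [e0, e1, e2]
    simp only [hmndef]
    omega
end
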